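/- Let C be a coaugmented differential graded coalgebra, A an augmented differential graded algebra, τ: C → A a twisting cochain, and N a differential graded right A-module. The canonical injection sending α ∈ Hom(C,N) to Φ_α: C⊗A → N, Φ_α(w⊗a) = α(w)·a, is a chain map from the twisted Hom-object Hom^τ(C,N) (with differential d^τ(f) = D(f) + (-1)^{|f|} f∪τ) to Hom(C⊗_τ A, N) (with the Hom-differential induced by the twisted differential on C⊗_τ A), and its image is exactly the subcomplex Hom_A(C⊗_τ A, N) of right-A-module morphisms; thus Hom^τ(C,N) ≅ Hom_A(C⊗_τ A, N) as chain complexes. -/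

import Mathlib

open scoped TensorProduct DirectSum

noncomputable section
namespace HPT

/-- The sign `(-1)^k` for an integer `k`. -/
def sgn (k : ℤ) : ℤ := (-1) ^ k.natAbs

variable {R : Type} [CommRing R]

section Graded

variable {M : Type} [AddCommGroup M] [Module R M]
variable {N : Type} [AddCommGroup N] [Module R N]

/-- `f : M → N` is homogeneous of degree `r` with respect to the gradings `ℳ`, `𝒩`. -/
def IsDeg (ℳ : ℤ → Submodule R M) (𝒩 : ℤ → Submodule R N) (r : ℤ) (f : M →ₗ[R] N) : Prop :=
  ∀ i : ℤ, ∀ x ∈ ℳ i, f x ∈ 𝒩 (i + r)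

/-- The image of `p ⊗ q` inside `M ⊗ N`. -/
def tmul' (p : Submodule R M) (q : Submodule R N) : Submodule R (M ⊗[R] N) :=
  LinearMap.range (TensorProduct.map p.subtype q.subtype)

/-- The sign operator multiplying a homogeneous element of degree `i` by `(-1)^(k*i)`;
used to implement the Eilenberg-Koszul sign convention. -/
def sgnOp (ℳ : ℤ → Submodule R M) [DirectSum.Decomposition ℳ] (k : ℤ) : M →ₗ[R] M :=
  (DirectSum.decomposeLinearEquiv ℳ).symm.toLinearMap ∘ₗ
    (DirectSum.toModule R ℤ (⨁ i, ↥(ℳ i)) fun i =>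
      sgn (k * i) • DirectSum.lof R ℤ (fun j => ↥(ℳ j)) i) ∘ₗ
    (DirectSum.decomposeLinearEquiv ℳ).toLinearMap

/-- The Hom-complex differential `D(f) = d_N ∘ f - (-1)^{|f|} f ∘ d_M` for `f` of degree `r`. -/
def DhGen (dM : M →ₗ[R] M) (dN : N →ₗ[R] N) (r : ℤ) (f : M →ₗ[R] N) : M →ₗ[R] N :=
  dN ∘ₗ f - sgn r • (f ∘ₗ dM)

/-- The cup pairing `f ∪ g = μ ∘ (f ⊗ g) ∘ Δ_M`, with the Koszul sign `(-1)^{|g| |m'|}`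
implemented by the sign operator `σ` (to be taken to be `sgnOp ℳ |g|`). -/
def cupGen {C B : Type} [AddCommGroup C] [Module R C] [AddCommGroup B] [Module R B]
    (ΔM : M →ₗ[R] M ⊗[R] C) (μ : N ⊗[R] B →ₗ[R] N) (σ : M →ₗ[R] M)
    (f : M →ₗ[R] N) (g : C →ₗ[R] B) : M →ₗ[R] N :=
  μ ∘ₗ TensorProduct.map f g ∘ₗ LinearMap.rTensor C σ ∘ₗ ΔM

/-- The cap operator `φ ∩ ·` on `M ⊗ N`, where `M` carries a comodule structure map
`ΔM : M → M ⊗ C` and `N` a module structure map `μ : A ⊗ N → N`; `k` is the degree of `φ`. -/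
def cap {C A' : Type} [AddCommGroup C] [Module R C] [AddCommGroup A'] [Module R A']
    (𝓜 : ℤ → Submodule R M) [DirectSum.Decomposition 𝓜]
    (ΔM : M →ₗ[R] M ⊗[R] C) (μ : A' ⊗[R] N →ₗ[R] N) (k : ℤ) (φ : C →ₗ[R] A') :
    M ⊗[R] N →ₗ[R] M ⊗[R] N :=
  LinearMap.lTensor M (μ ∘ₗ LinearMap.rTensor N φ) ∘ₗ
    (TensorProduct.assoc R M C N).toLinearMap ∘ₗ
    LinearMap.rTensor N (LinearMap.rTensor C (sgnOp 𝓜 k) ∘ₗ ΔM)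

/-- The tensor-product differential `d ⊗ 1 + (-1)^{|m|} 1 ⊗ d` on `M ⊗ N`. -/
def dTens (𝓜 : ℤ → Submodule R M) [DirectSum.Decomposition 𝓜]
    (dM : M →ₗ[R] M) (dN : N →ₗ[R] N) : M ⊗[R] N →ₗ[R] M ⊗[R] N :=
  LinearMap.rTensor N dM + LinearMap.lTensor M dN ∘ₗ LinearMap.rTensor N (sgnOp 𝓜 1)

end Graded

section Coalg

variable {C : Type} [AddCommGroup C] [Module R C]

/-- Differential graded coalgebra structure data (internally ℤ-graded). -/
structure IsDGCoalg (𝒞 : ℤ → Submodule R C) [DirectSum.Decomposition 𝒞]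
    (Δ : C →ₗ[R] C ⊗[R] C) (εC : C →ₗ[R] R) (dC : C →ₗ[R] C) : Prop where
  coassoc : (TensorProduct.assoc R C C C).toLinearMap ∘ₗ LinearMap.rTensor C Δ ∘ₗ Δ
      = LinearMap.lTensor C Δ ∘ₗ Δ
  counit_left : (TensorProduct.lid R C).toLinearMap ∘ₗ LinearMap.rTensor C εC ∘ₗ Δ
      = LinearMap.id
  counit_right : (TensorProduct.rid R C).toLinearMap ∘ₗ LinearMap.lTensor C εC ∘ₗ Δ
      = LinearMap.id
  comul_deg : ∀ n : ℤ, ∀ x ∈ 𝒞 n, Δ x ∈ ⨆ p : ℤ, tmul' (𝒞 p) (𝒞 (n - p))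
  d_deg : IsDeg 𝒞 𝒞 (-1) dC
  d_sq : dC ∘ₗ dC = 0
  comul_chain : Δ ∘ₗ dC =
      (LinearMap.rTensor C dC + LinearMap.lTensor C dC ∘ₗ LinearMap.rTensor C (sgnOp 𝒞 1)) ∘ₗ Δ
  counit_deg : ∀ i : ℤ, i ≠ 0 → ∀ x ∈ 𝒞 i, εC x = 0
  counit_chain : εC ∘ₗ dC = 0

/-- Coaugmentation data for a dg coalgebra: a grouplike cycle `e` of degree 0. -/
structure IsCoaug (Δ : C →ₗ[R] C ⊗[R] C) (εC : C →ₗ[R] R) (dC : C →ₗ[R] C)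
    (𝒞 : ℤ → Submodule R C) (e : C) : Prop where
  mem : e ∈ 𝒞 0
  counit : εC e = 1
  diag : Δ e = e ⊗ₜ[R] e
  d : dC e = 0

end Coalg

section Alg

variable {A : Type} [Ring A] [Algebra R A]

/-- Differential graded algebra structure (internally graded, multiplication of `A`). -/
structure IsDGAlg (𝒜 : ℤ → Submodule R A) (dA : A →ₗ[R] A) : Prop where
  d_deg : IsDeg 𝒜 𝒜 (-1) dA
  d_sq : dA ∘ₗ dA = 0
  leibniz : ∀ i : ℤ, ∀ x ∈ 𝒜 i, ∀ y : A, dA (x * y) = dA x * y + sgn i • (x * dA y)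
  d_one : dA 1 = 0

/-- Augmentation for a dg algebra. -/
structure IsAug (𝒜 : ℤ → Submodule R A) (dA : A →ₗ[R] A) (εA : A →ₐ[R] R) : Prop where
  vanish : ∀ i : ℤ, i ≠ 0 → ∀ x ∈ 𝒜 i, εA x = 0
  chain : ∀ x : A, εA (dA x) = 0

end Alg

section Conv

variable {C : Type} [AddCommGroup C] [Module R C]
variable {A : Type} [Ring A] [Algebra R A]

/-- The cup (convolution) product on `Hom(C, A)`; `s` is the degree of `g`. -/
def cup (𝒞 : ℤ → Submodule R C) [DirectSum.Decomposition 𝒞] (Δ : C →ₗ[R] C ⊗[R] C)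
    (s : ℤ) (f g : C →ₗ[R] A) : C →ₗ[R] A :=
  cupGen Δ (LinearMap.mul' R A) (sgnOp 𝒞 s) f g

/-- The convolution unit `η ∘ ε : C → A`. -/
def convOne (A : Type) [Ring A] [Algebra R A] (εC : C →ₗ[R] R) : C →ₗ[R] A :=
  Algebra.linearMap R A ∘ₗ εC

variable (𝒞 : ℤ → Submodule R C) [DirectSum.Decomposition 𝒞]

/-- `τ : C → A` is a twisting cochain. -/
structure IsTwisting (Δ : C →ₗ[R] C ⊗[R] C) (εC : C →ₗ[R] R) (dC : C →ₗ[R] C) (e : C)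
    (𝒜 : ℤ → Submodule R A) (dA : A →ₗ[R] A) (εA : A →ₐ[R] R) (τ : C →ₗ[R] A) : Prop where
  deg : IsDeg 𝒞 𝒜 (-1) τ
  eq : DhGen dC dA (-1) τ = cup 𝒞 Δ (-1) τ τ
  unit : τ e = 0
  counit : εA.toLinearMap ∘ₗ τ = 0

/-- `ψ` is a homotopy of twisting cochains from `τ₁` to `τ₂`. -/
structure IsTCHomotopy (Δ : C →ₗ[R] C ⊗[R] C) (εC : C →ₗ[R] R) (dC : C →ₗ[R] C) (e : C)
    (𝒜 : ℤ → Submodule R A) (dA : A →ₗ[R] A) (εA : A →ₐ[R] R)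
    (τ₁ τ₂ ψ : C →ₗ[R] A) : Prop where
  deg : IsDeg 𝒞 𝒜 0 ψ
  eq : DhGen dC dA 0 ψ = cup 𝒞 Δ 0 τ₁ ψ - cup 𝒞 Δ (-1) ψ τ₂
  unit : ψ e = 1
  counit : εA.toLinearMap ∘ₗ ψ = εC

end Conv

section Mod

variable {A : Type} [Ring A] [Algebra R A]
variable {N : Type} [AddCommGroup N] [Module R N]

/-- Differential graded left module over a dg algebra. -/
structure IsDGModLeft (𝒜 : ℤ → Submodule R A) (dA : A →ₗ[R] A)
    (𝒩 : ℤ → Submodule R N) (dN : N →ₗ[R] N) (μ : A ⊗[R] N →ₗ[R] N) : Prop where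
  one_act : ∀ x : N, μ (1 ⊗ₜ x) = x
  mul_act : ∀ (a b : A) (x : N), μ ((a * b) ⊗ₜ x) = μ (a ⊗ₜ μ (b ⊗ₜ x))
  act_deg : ∀ i j : ℤ, ∀ a ∈ 𝒜 i, ∀ x ∈ 𝒩 j, μ (a ⊗ₜ x) ∈ 𝒩 (i + j)
  d_deg : IsDeg 𝒩 𝒩 (-1) dN
  d_sq : dN ∘ₗ dN = 0
  chain : ∀ i : ℤ, ∀ a ∈ 𝒜 i, ∀ x : N,
    dN (μ (a ⊗ₜ x)) = μ (dA a ⊗ₜ x) + sgn i • μ (a ⊗ₜ dN x)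

/-- Differential graded right module over a dg algebra. -/
structure IsDGModRight (𝒜 : ℤ → Submodule R A) (dA : A →ₗ[R] A)
    (𝒩 : ℤ → Submodule R N) (dN : N →ₗ[R] N) (μ : N ⊗[R] A →ₗ[R] N) : Prop where
  one_act : ∀ x : N, μ (x ⊗ₜ 1) = x
  mul_act : ∀ (x : N) (a b : A), μ (x ⊗ₜ (a * b)) = μ (μ (x ⊗ₜ a) ⊗ₜ b)
  act_deg : ∀ i j : ℤ, ∀ x ∈ 𝒩 i, ∀ a ∈ 𝒜 j, μ (x ⊗ₜ a) ∈ 𝒩 (i + j)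
  d_deg : IsDeg 𝒩 𝒩 (-1) dN
  d_sq : dN ∘ₗ dN = 0
  chain : ∀ i j : ℤ, ∀ x ∈ 𝒩 i, ∀ a ∈ 𝒜 j,
    dN (μ (x ⊗ₜ a)) = μ (dN x ⊗ₜ a) + sgn i • μ (x ⊗ₜ dA a)

variable {C : Type} [AddCommGroup C] [Module R C]
variable {M : Type} [AddCommGroup M] [Module R M]

/-- Differential graded comodule over a dg coalgebra, with structure map `M → M ⊗ C`. -/
structure IsDGComod (𝒞 : ℤ → Submodule R C) (Δ : C →ₗ[R] C ⊗[R] C)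
    (εC : C →ₗ[R] R) (dC : C →ₗ[R] C)
    (𝓜 : ℤ → Submodule R M) [DirectSum.Decomposition 𝓜] (dM : M →ₗ[R] M)
    (ΔM : M →ₗ[R] M ⊗[R] C) : Prop where
  coassoc : (TensorProduct.assoc R M C C).toLinearMap ∘ₗ LinearMap.rTensor C ΔM ∘ₗ ΔM
      = LinearMap.lTensor M Δ ∘ₗ ΔM
  counit : (TensorProduct.rid R M).toLinearMap ∘ₗ LinearMap.lTensor M εC ∘ₗ ΔM = LinearMap.id
  deg : ∀ n : ℤ, ∀ x ∈ 𝓜 n, ΔM x ∈ ⨆ p : ℤ, tmul' (𝓜 p) (𝒞 (n - p))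
  d_deg : IsDeg 𝓜 𝓜 (-1) dM
  d_sq : dM ∘ₗ dM = 0
  chain : ΔM ∘ₗ dM =
    (LinearMap.rTensor C dM + LinearMap.lTensor M dC ∘ₗ LinearMap.rTensor C (sgnOp 𝓜 1)) ∘ₗ ΔM

end Mod

section Cocomplete

variable {C : Type} [AddCommGroup C] [Module R C]

/-- Iterated tensor powers of `C`. -/
def iTensM (R C : Type) [CommRing R] [AddCommGroup C] [Module R C] : ℕ → ModuleCat R
  | 0 => ModuleCat.of R C
  | n + 1 => ModuleCat.of R ((iTensM R C n) ⊗[R] C)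

/-- The reduced projection `id - η ∘ ε` associated to a coaugmentation. -/
def redProj (εC : C →ₗ[R] R) (e : C) : C →ₗ[R] C :=
  LinearMap.id - LinearMap.toSpanSingleton R C e ∘ₗ εC

/-- The reduced iterated comultiplication `C → (JC)^{⊗(n+1)}`. -/
def redIter (Δ : C →ₗ[R] C ⊗[R] C) (π' : C →ₗ[R] C) : (n : ℕ) → (C →ₗ[R] iTensM R C n)
  | 0 => π'
  | n + 1 => TensorProduct.map (redIter Δ π' n) π' ∘ₗ Δ

/-- The coaugmentation filtration `F_n C = ker (C → (JC)^{⊗(n+1)})`. -/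
def coaugFil (Δ : C →ₗ[R] C ⊗[R] C) (εC : C →ₗ[R] R) (e : C) (n : ℕ) : Submodule R C :=
  LinearMap.ker (redIter Δ (redProj εC e) n)

/-- The coaugmented coalgebra `C` is cocomplete: it is the union of the coaugmentation
filtration. -/
def Cocomplete (Δ : C →ₗ[R] C ⊗[R] C) (εC : C →ₗ[R] R) (e : C) : Prop :=
  ∀ x : C, ∃ n : ℕ, x ∈ coaugFil Δ εC e n

end Cocomplete

end HPT

/-! Every `α : C → N` extends uniquely to the right `A`-linear map `Φ_α(w ⊗ a) = α(w)·a` on the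
free module `C ⊗ A`. Since `Φ_α` is determined by its values on `C ⊗ 1`, the right `A`-linear maps
are exactly the `Φ_α`. The Leibniz rule of `N` turns the Hom-differential of `Φ_α` with respect to
the untwisted differential of `C ⊗ A` into `Φ_{Dα}`, and associativity of the action gives
`Φ_α ∘ (τ ∩ ·) = Φ_{α ∪ τ}`; together these say `D(Φ_α) = Φ_{d^τ α}`. -/

lemma TensorProduct.ext_homogeneous {R M N Q : Type} [CommRing R]
    [AddCommGroup M] [Module R M] [AddCommGroup N] [Module R N] [AddCommGroup Q] [Module R Q]
    (ℳ : ℤ → Submodule R M) [DirectSum.Decomposition ℳ]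
    (𝒩 : ℤ → Submodule R N) [DirectSum.Decomposition 𝒩] {F G : M ⊗[R] N →ₗ[R] Q}
    (h : ∀ i j : ℤ, ∀ x ∈ ℳ i, ∀ y ∈ 𝒩 j, F (x ⊗ₜ y) = G (x ⊗ₜ y)) : F = G := by
  refine TensorProduct.ext' fun x y => ?_
  induction x using DirectSum.Decomposition.inductionOn ℳ with
  | zero => simp
  | add x x' hx hx' => simp only [TensorProduct.add_tmul, map_add, hx, hx']
  | @homogeneous i x =>
    induction y using DirectSum.Decomposition.inductionOn 𝒩 with
    | zero => simp
    | add y y' hy hy' => simp only [TensorProduct.tmul_add, map_add, hy, hy']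
    | @homogeneous j y => exact h i j x x.2 y y.2

namespace HPT

variable {R : Type} [CommRing R]

lemma sgn_eq_ite (k : ℤ) : sgn k = if Even k then 1 else -1 := by
  unfold sgn
  rcases Int.even_or_odd k with h | h
  · rw [if_pos h, (Int.natAbs_even.mpr h).neg_one_pow]
  · rw [if_neg (Int.not_even_iff_odd.mpr h), (Int.natAbs_odd.mpr h).neg_one_pow]

lemma sgn_add (i j : ℤ) : sgn (i + j) = sgn i * sgn j := by
  simp only [sgn_eq_ite, Int.even_add]
  by_cases hi : Even i <;> by_cases hj : Even j <;> simp [hi, hj]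

lemma sgnOp_apply_of_mem {M : Type} [AddCommGroup M] [Module R M]
    (ℳ : ℤ → Submodule R M) [DirectSum.Decomposition ℳ] (k : ℤ) {i : ℤ} {x : M}
    (hx : x ∈ ℳ i) : sgnOp ℳ k x = sgn (k * i) • x := by
  unfold sgnOp
  simp only [LinearMap.coe_comp, Function.comp_apply, LinearEquiv.coe_coe,
    DirectSum.decomposeLinearEquiv_apply]
  rw [DirectSum.decompose_of_mem ℳ hx, ← DirectSum.lof_eq_of R, DirectSum.toModule_lof,
    LinearMap.smul_apply, map_zsmul, DirectSum.lof_eq_of,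
    DirectSum.decomposeLinearEquiv_symm_apply, DirectSum.decompose_symm_of]

section FreeExtension

variable {C : Type} [AddCommGroup C] [Module R C]
variable {A : Type} [Ring A] [Algebra R A]
variable {N : Type} [AddCommGroup N] [Module R N]

def freeExt (μ : N ⊗[R] A →ₗ[R] N) : (C →ₗ[R] N) →ₗ[R] (C ⊗[R] A →ₗ[R] N) :=
  LinearMap.llcomp R (C ⊗[R] A) (N ⊗[R] A) N μ ∘ₗ LinearMap.rTensorHom A

variable {μ : N ⊗[R] A →ₗ[R] N}

@[simp]
lemma freeExt_tmul (α : C →ₗ[R] N) (w : C) (a : A) : freeExt μ α (w ⊗ₜ a) = μ (α w ⊗ₜ a) :=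
  rfl

lemma freeExt_comp_tmul_one (hone : ∀ x : N, μ (x ⊗ₜ 1) = x) (α : C →ₗ[R] N) :
    freeExt μ α ∘ₗ (TensorProduct.mk R C A).flip 1 = α := by
  ext w
  simp [hone]

lemma freeExt_injective (hone : ∀ x : N, μ (x ⊗ₜ 1) = x) :
    Function.Injective (freeExt μ : (C →ₗ[R] N) → (C ⊗[R] A →ₗ[R] N)) :=
  Function.LeftInverse.injective (g := (· ∘ₗ (TensorProduct.mk R C A).flip 1))
    (freeExt_comp_tmul_one hone)

lemma freeExt_comp_tmul_one_of_comp_mulRight {F : C ⊗[R] A →ₗ[R] N}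
    (hF : ∀ a : A, F ∘ₗ LinearMap.lTensor C (LinearMap.mulRight R a)
      = (μ ∘ₗ (TensorProduct.mk R N A).flip a) ∘ₗ F) :
    freeExt μ (F ∘ₗ (TensorProduct.mk R C A).flip 1) = F := by
  refine TensorProduct.ext' fun w a => ?_
  simpa using (LinearMap.congr_fun (hF a) (w ⊗ₜ 1)).symm

lemma DhGen_dTens_freeExt (𝒞 : ℤ → Submodule R C) [DirectSum.Decomposition 𝒞]
    (𝒜 : ℤ → Submodule R A) [DirectSum.Decomposition 𝒜] {dC : C →ₗ[R] C} {dA : A →ₗ[R] A}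
    {𝒩 : ℤ → Submodule R N} {dN : N →ₗ[R] N} (hN : IsDGModRight 𝒜 dA 𝒩 dN μ)
    {r : ℤ} {α : C →ₗ[R] N} (hα : IsDeg 𝒞 𝒩 r α) :
    DhGen (dTens 𝒞 dC dA) dN r (freeExt μ α) = freeExt μ (DhGen dC dN r α) := by
  refine TensorProduct.ext_homogeneous 𝒞 𝒜 fun i j w hw a ha => ?_
  simp only [DhGen, dTens, LinearMap.sub_apply, LinearMap.smul_apply, LinearMap.comp_apply,
    LinearMap.add_apply, LinearMap.rTensor_tmul, LinearMap.lTensor_tmul, freeExt_tmul,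
    sgnOp_apply_of_mem 𝒞 1 hw, one_mul, map_add, map_sub, map_zsmul]
  rw [hN.chain _ _ _ (hα i w hw) _ ha, sgn_add, ← TensorProduct.smul_tmul', map_zsmul]
  module

variable (hmul : ∀ (x : N) (a b : A), μ (x ⊗ₜ (a * b)) = μ (μ (x ⊗ₜ a) ⊗ₜ b))
include hmul

lemma freeExt_comp_mulRight (α : C →ₗ[R] N) (a : A) :
    freeExt μ α ∘ₗ LinearMap.lTensor C (LinearMap.mulRight R a)
      = (μ ∘ₗ (TensorProduct.mk R N A).flip a) ∘ₗ freeExt μ α := by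
  ext w b
  simp [hmul]

lemma range_freeExt :
    Set.range (freeExt μ : (C →ₗ[R] N) → (C ⊗[R] A →ₗ[R] N))
      = {F | ∀ a : A, F ∘ₗ LinearMap.lTensor C (LinearMap.mulRight R a)
          = (μ ∘ₗ (TensorProduct.mk R N A).flip a) ∘ₗ F} := by
  ext F
  constructor
  · rintro ⟨α, rfl⟩ a
    exact freeExt_comp_mulRight hmul α a
  · intro hF
    exact ⟨_, freeExt_comp_tmul_one_of_comp_mulRight hF⟩

lemma freeExt_comp_cap (𝒞 : ℤ → Submodule R C) [DirectSum.Decomposition 𝒞]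
    (Δ : C →ₗ[R] C ⊗[R] C) (k : ℤ) (α : C →ₗ[R] N) (φ : C →ₗ[R] A) :
    freeExt μ α ∘ₗ cap 𝒞 Δ (LinearMap.mul' R A) k φ
      = freeExt μ (cupGen Δ μ (sgnOp 𝒞 k) α φ) := by
  refine TensorProduct.ext' fun w a => ?_
  simp only [cap, cupGen, LinearMap.comp_apply, LinearMap.rTensor_tmul, freeExt_tmul]
  induction LinearMap.rTensor C (sgnOp 𝒞 k) (Δ w) using TensorProduct.induction_on with
  | zero => simp
  | tmul u v => simp [hmul]
  | add ξ ξ' hξ hξ' => simp only [TensorProduct.add_tmul, map_add, hξ, hξ']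

end FreeExtension

end HPT

open HPT in
theorem statement18_general
    {R : Type} [CommRing R]
    {C : Type} [AddCommGroup C] [Module R C]
    (𝒞 : ℤ → Submodule R C) [DirectSum.Decomposition 𝒞]
    (Δ : C →ₗ[R] C ⊗[R] C) (dC : C →ₗ[R] C)
    {A : Type} [Ring A] [Algebra R A]
    (𝒜 : ℤ → Submodule R A) [GradedAlgebra 𝒜] (dA : A →ₗ[R] A)
    {N : Type} [AddCommGroup N] [Module R N]
    (𝒩 : ℤ → Submodule R N) (dN : N →ₗ[R] N) (μN : N ⊗[R] A →ₗ[R] N)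
    (hN : IsDGModRight 𝒜 dA 𝒩 dN μN)
    (τ : C →ₗ[R] A) :
    -- `Φ` is a chain map from `Hom^τ(C,N)` to `Hom(C ⊗_τ A, N)`
    (∀ (r : ℤ) (α : C →ₗ[R] N), IsDeg 𝒞 𝒩 r α →
        μN ∘ₗ LinearMap.rTensor A
            (DhGen dC dN r α + sgn r • cupGen Δ μN (sgnOp 𝒞 (-1)) α τ)
          = dN ∘ₗ (μN ∘ₗ LinearMap.rTensor A α)
            - sgn r • ((μN ∘ₗ LinearMap.rTensor A α) ∘ₗ
                (dTens 𝒞 dC dA - cap 𝒞 Δ (LinearMap.mul' R A) (-1) τ)))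
      -- `Φ` is injective
      ∧ Function.Injective (fun α : C →ₗ[R] N => μN ∘ₗ LinearMap.rTensor A α)
      -- the image of `Φ` consists exactly of the right `A`-module morphisms
      ∧ Set.range (fun α : C →ₗ[R] N => μN ∘ₗ LinearMap.rTensor A α)
          = {F : C ⊗[R] A →ₗ[R] N | ∀ a : A,
              F ∘ₗ LinearMap.lTensor C (LinearMap.mulRight R a)
                = (μN ∘ₗ (TensorProduct.mk R N A).flip a) ∘ₗ F} := by
  refine ⟨fun r α hα => ?_, freeExt_injective hN.one_act, range_freeExt hN.mul_act⟩
  change freeExt μN _ = dN ∘ₗ freeExt μN α - sgn r • (freeExt μN α ∘ₗ _)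
  rw [map_add, map_zsmul, ← DhGen_dTens_freeExt 𝒞 𝒜 hN hα, ← freeExt_comp_cap hN.mul_act,
    DhGen, LinearMap.comp_sub, smul_sub]
  abel

open HPT in
/-- the map `α ↦ Φ_α`, `Φ_α(w ⊗ a) = α(w)·a`, is an injective chain map
from the twisted Hom-object `Hom^τ(C,N)` to `Hom(C ⊗_τ A, N)` whose image is exactly
the subcomplex of right `A`-module morphisms; hence
`Hom^τ(C,N) ≅ Hom_A(C ⊗_τ A, N)` as chain complexes. -/
theorem statement18
    {R : Type} [CommRing R]
    {C : Type} [AddCommGroup C] [Module R C]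
    (𝒞 : ℤ → Submodule R C) [DirectSum.Decomposition 𝒞]
    (Δ : C →ₗ[R] C ⊗[R] C) (εC : C →ₗ[R] R) (dC : C →ₗ[R] C) (e : C)
    {A : Type} [Ring A] [Algebra R A]
    (𝒜 : ℤ → Submodule R A) [GradedAlgebra 𝒜] (dA : A →ₗ[R] A) (εA : A →ₐ[R] R)
    {N : Type} [AddCommGroup N] [Module R N]
    (𝒩 : ℤ → Submodule R N) (dN : N →ₗ[R] N) (μN : N ⊗[R] A →ₗ[R] N)
    (hC : IsDGCoalg 𝒞 Δ εC dC) (hCe : IsCoaug Δ εC dC 𝒞 e)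
    (hA : IsDGAlg 𝒜 dA) (hAug : IsAug 𝒜 dA εA)
    (hN : IsDGModRight 𝒜 dA 𝒩 dN μN)
    (τ : C →ₗ[R] A) (hτ : IsTwisting 𝒞 Δ εC dC e 𝒜 dA εA τ) :
    -- `Φ` is a chain map from `Hom^τ(C,N)` to `Hom(C ⊗_τ A, N)`
    (∀ (r : ℤ) (α : C →ₗ[R] N), IsDeg 𝒞 𝒩 r α →
        μN ∘ₗ LinearMap.rTensor A
            (DhGen dC dN r α + sgn r • cupGen Δ μN (sgnOp 𝒞 (-1)) α τ)
          = dN ∘ₗ (μN ∘ₗ LinearMap.rTensor A α)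
            - sgn r • ((μN ∘ₗ LinearMap.rTensor A α) ∘ₗ
                (dTens 𝒞 dC dA - cap 𝒞 Δ (LinearMap.mul' R A) (-1) τ)))
      -- `Φ` is injective
      ∧ Function.Injective (fun α : C →ₗ[R] N => μN ∘ₗ LinearMap.rTensor A α)
      -- the image of `Φ` consists exactly of the right `A`-module morphisms
      ∧ Set.range (fun α : C →ₗ[R] N => μN ∘ₗ LinearMap.rTensor A α)
          = {F : C ⊗[R] A →ₗ[R] N | ∀ a : A,
              F ∘ₗ LinearMap.lTensor C (LinearMap.mulRight R a)
                = (μN ∘ₗ (TensorProduct.mk R N A).flip a) ∘ₗ F} :=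
  statement18_general 𝒞 Δ dC 𝒜 dA 𝒩 dN μN hN τ
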